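/- With the hypotheses of the previous statement, equality ⟨ξ, A_μ⟩ = 0 holds if and only if μ(M − Y) = 0, i.e., the measure μ is supported in Y. -/

import Mathlib

open MeasureTheory Manifold

theorem integral_eq_zero_iff_measure_compl_eq_zero {X : Type*} [MeasurableSpace X]
    {μ : Measure X} {g : X → ℝ} {Y : Set X} (hg : Integrable g μ)
    (h_zero : ∀ x ∈ Y, g x = 0) (h_neg : ∀ x ∉ Y, g x < 0) :
    ∫ x, g x ∂μ = 0 ↔ μ Yᶜ = 0 := by
  have h_support : {x | g x ≠ 0} = Yᶜ := by
    ext x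
    by_cases hx : x ∈ Y
    · simp [hx, h_zero x hx]
    · simp [hx, (h_neg x hx).ne]
  have h_nonneg : 0 ≤ -g := fun x => by
    by_cases hx : x ∈ Y
    · simp [h_zero x hx]
    · simpa using (h_neg x hx).le
  calc ∫ x, g x ∂μ = 0 ↔ ∫ x, (-g) x ∂μ = 0 := by
        simp only [Pi.neg_apply, integral_neg, neg_eq_zero]
    _ ↔ -g =ᵐ[μ] 0 := integral_eq_zero_iff_of_nonneg h_nonneg hg.neg
    _ ↔ μ Yᶜ = 0 := by
      simp only [Filter.EventuallyEq, ae_iff, Pi.neg_apply, Pi.zero_apply, neg_eq_zero, h_support]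

theorem lyapunov_one_form_pairing_zero_iff_general
    {E : Type*} [NormedAddCommGroup E] [NormedSpace ℝ E]
    {H : Type*} [TopologicalSpace H] (I : ModelWithCorners ℝ E H)
    {M : Type*} [TopologicalSpace M] [ChartedSpace H M]
    [CompactSpace M] [MeasurableSpace M] [BorelSpace M]
    -- the flow and its generating vector field
    (V : M → E) (hV : ContMDiff I 𝓘(ℝ, E) (⊤ : ℕ∞) V)
    -- the closed flow-invariant subset Y
    (Y : Set M)
    -- the smooth closed Lyapunov 1-form ω for (Φ, Y)
    (ω : M → (E →L[ℝ] ℝ)) (hω : ContMDiff I 𝓘(ℝ, E →L[ℝ] ℝ) (⊤ : ℕ∞) ω)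
    (hL1 : ∀ x ∉ Y, ω x (V x) < 0)
    (hL2 : ∃ U : Set M, IsOpen U ∧ Y ⊆ U ∧ ∃ f : M → ℝ,
      ContMDiffOn I 𝓘(ℝ, ℝ) (⊤ : ℕ∞) f U ∧ (∀ x ∈ U, ω x = mfderiv I 𝓘(ℝ, ℝ) f x) ∧
      ∀ x ∈ Y, mfderiv I 𝓘(ℝ, ℝ) f x = 0)
    -- the invariant positive finite Borel measure
    (μ : Measure M) [IsFiniteMeasure μ] :
    ∫ x, ω x (V x) ∂μ = 0 ↔ μ Yᶜ = 0 := by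
  obtain ⟨U, -, hYU, f, -, hωf, hdf⟩ := hL2
  have h_zero : ∀ x ∈ Y, ω x (V x) = 0 := fun x hx => by
    rw [hωf x (hYU hx), hdf x hx]
    -- `0` lives in the tangent-space hom type, which is only definitionally `E →L[ℝ] ℝ`
    rfl
  have h_integrable : Integrable (fun x => ω x (V x)) μ :=
    (hω.continuous.clm_apply hV.continuous).integrable_of_hasCompactSupport
      (.of_compactSpace _)
  exact integral_eq_zero_iff_measure_compl_eq_zero h_integrable h_zero hL1

/-- With the hypotheses of Statement 6 (ω a smooth Lyapunov 1-form for (Φ,Y), μ a Φ-invariant positive Borel measure), equality ⟨ξ, 𝒜_μ⟩ = 0 holds iff μ(M − Y) = 0, i.e. μ is supported in Y.  Here ω is a smooth Lyapunov 1-form for (Φ, Y) in the class ξ — i.e.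
(Λ1) ι_V(ω) < 0 on M − Y and (Λ2) ω = df on an open neighborhood U of Y with df|_Y = 0 —
then for every Φ-invariant positive Borel measure μ on the closed manifold M one has
⟨ξ, 𝒜_μ⟩ = ∫_M ι_V(ω) dμ ≤ 0. -/
theorem lyapunov_one_form_pairing_zero_iff
    {E : Type*} [NormedAddCommGroup E] [NormedSpace ℝ E]
    {H : Type*} [TopologicalSpace H] (I : ModelWithCorners ℝ E H)
    {M : Type*} [TopologicalSpace M] [ChartedSpace H M] [IsManifold I (⊤ : ℕ∞) M]
    [CompactSpace M] [MeasurableSpace M] [BorelSpace M]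
    -- the flow and its generating vector field
    (Φ : ℝ → M → M) (hΦcont : Continuous fun p : ℝ × M => Φ p.1 p.2)
    (hΦ0 : ∀ x, Φ 0 x = x) (hΦadd : ∀ s t x, Φ s (Φ t x) = Φ (s + t) x)
    (V : M → E) (hV : ContMDiff I 𝓘(ℝ, E) (⊤ : ℕ∞) V)
    (hgen : ∀ (g : M → ℝ), ContMDiff I 𝓘(ℝ, ℝ) (⊤ : ℕ∞) g → ∀ x,
      HasDerivAt (fun t => g (Φ t x)) (mfderiv I 𝓘(ℝ, ℝ) g x (V x)) 0)
    -- the closed flow-invariant subset Y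
    (Y : Set M) (hYclosed : IsClosed Y) (hYinv : ∀ t, ∀ x ∈ Y, Φ t x ∈ Y)
    -- the smooth closed Lyapunov 1-form ω for (Φ, Y)
    (ω : M → (E →L[ℝ] ℝ)) (hω : ContMDiff I 𝓘(ℝ, E →L[ℝ] ℝ) (⊤ : ℕ∞) ω)
    (hclosed : ∀ x : M, ∃ W : Set M, IsOpen W ∧ x ∈ W ∧ ∃ g : M → ℝ,
      ContMDiffOn I 𝓘(ℝ, ℝ) (⊤ : ℕ∞) g W ∧ ∀ y ∈ W, ω y = mfderiv I 𝓘(ℝ, ℝ) g y)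
    (hL1 : ∀ x ∉ Y, ω x (V x) < 0)
    (hL2 : ∃ U : Set M, IsOpen U ∧ Y ⊆ U ∧ ∃ f : M → ℝ,
      ContMDiffOn I 𝓘(ℝ, ℝ) (⊤ : ℕ∞) f U ∧ (∀ x ∈ U, ω x = mfderiv I 𝓘(ℝ, ℝ) f x) ∧
      ∀ x ∈ Y, mfderiv I 𝓘(ℝ, ℝ) f x = 0)
    -- the invariant positive finite Borel measure
    (μ : Measure M) [IsFiniteMeasure μ] (hμ : ∀ t, Measure.map (Φ t) μ = μ) :
    ∫ x, ω x (V x) ∂μ = 0 ↔ μ Yᶜ = 0 :=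
  lyapunov_one_form_pairing_zero_iff_general I V hV Y ω hω hL1 hL2 μ
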